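/- Let k be a field and n a natural number. If M is an n×n matrix over k satisfying M² = M (i.e. M is idempotent), then M is similar to the diagonal matrix whose first r diagonal entries are 1 and whose remaining diagonal entries are 0, where r is the rank of M. That is, there exists an invertible n×n matrix P over k such that P * M * P⁻¹ is the diagonal matrix A_r := diagonal(fun i => if (i : ℕ) < r then 1 else 0) with r = rank M. -/

import Mathlib

/-!
The range and kernel of an idempotent `f` are complementary, and `f` is the identity on its
range. So a basis of `range f` followed by a basis of `ker f` is a basis of the whole space in
which `f` is diagonal with `finrank (range f)` ones followed by zeros; for `f = toLin' M` this
rank is `M.rank`, and the change of basis from the standard one is the required `P`.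
-/

open Matrix Module LinearMap

theorem LinearMap.toMatrix_eq_diagonal {R ι V : Type*} [CommSemiring R] [Fintype ι]
    [DecidableEq ι] [AddCommMonoid V] [Module R V] {b : Basis ι R V} {f : V →ₗ[R] V}
    {d : ι → R} (h : ∀ i, f (b i) = d i • b i) :
    toMatrix b b f = diagonal d := by
  ext i j
  rw [toMatrix_apply, h, map_smul, b.repr_self, Finsupp.smul_apply, smul_eq_mul,
    diagonal_apply, Finsupp.single_apply]
  grind

theorem Matrix.exists_GL_mul_mul_inv_eq_toMatrix {R ι : Type*} [CommRing R] [Fintype ι]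
    [DecidableEq ι] (M : Matrix ι ι R) (b : Basis ι R (ι → R)) :
    ∃ P : GL ι R, (P : Matrix ι ι R) * M * ((P⁻¹ : GL ι R) : Matrix ι ι R) =
      toMatrix b b (toLin' M) := by
  let e := Pi.basisFun R ι
  refine ⟨⟨b.toMatrix e, e.toMatrix b, b.toMatrix_mul_toMatrix_flip e,
    e.toMatrix_mul_toMatrix_flip b⟩, ?_⟩
  rw [← basis_toMatrix_mul_linearMap_toMatrix_mul_basis_toMatrix b e b e,
    toMatrix_eq_toMatrix', toMatrix'_toLin']
  rfl

namespace LinearMap.IsIdempotentElem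

section DivisionRing

variable {K V : Type*} [DivisionRing K] [AddCommGroup V] [Module K V] [FiniteDimensional K V]
  {f : V →ₗ[K] V}

noncomputable def rangeKerBasis (hf : IsIdempotentElem f) :
    Basis (Fin (finrank K (range f) + finrank K (ker f))) K V :=
  (((finBasis K (range f)).prod (finBasis K (ker f))).map
    (Submodule.prodEquivOfIsCompl _ _ hf.isCompl)).reindex finSumFinEquiv

theorem apply_rangeKerBasis (hf : IsIdempotentElem f) (i : Fin _) :
    f (hf.rangeKerBasis i) =
      (if (i : ℕ) < finrank K (range f) then 1 else 0 : K) • hf.rangeKerBasis i := by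
  induction i using Fin.addCases with
  | left j => simp [rangeKerBasis, hf.mem_range_iff.mp]
  | right j => simp [rangeKerBasis]

end DivisionRing

theorem exists_basis_toMatrix_eq_diagonal {K V : Type*} [Field K] [AddCommGroup V] [Module K V]
    [FiniteDimensional K V] {f : V →ₗ[K] V} (hf : IsIdempotentElem f) {n : ℕ}
    (hn : finrank K V = n) :
    ∃ b : Basis (Fin n) K V, toMatrix b b f =
      diagonal fun i : Fin n => if (i : ℕ) < finrank K (range f) then 1 else 0 := by
  have hdim : finrank K (range f) + finrank K (ker f) = n :=
    (finrank_range_add_finrank_ker f).trans hn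
  refine ⟨hf.rangeKerBasis.reindex (finCongr hdim), toMatrix_eq_diagonal fun i => ?_⟩
  simpa using hf.apply_rangeKerBasis (Fin.cast hdim.symm i)

end LinearMap.IsIdempotentElem

theorem idempotent_similar_to_rank_diagonal
    (k : Type*) [Field k] (n : ℕ) (M : Matrix (Fin n) (Fin n) k)
    (hM : M * M = M) :
    ∃ P : GL (Fin n) k,
      (P : Matrix (Fin n) (Fin n) k) * M * ((P⁻¹ : GL (Fin n) k) : Matrix (Fin n) (Fin n) k)
        = Matrix.diagonal (fun i : Fin n => if (i : ℕ) < M.rank then (1 : k) else 0) := by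
  have hf : IsIdempotentElem (toLin' M) := by
    rw [IsIdempotentElem, Module.End.mul_eq_comp, ← toLin'_mul, hM]
  obtain ⟨b, hb⟩ := hf.exists_basis_toMatrix_eq_diagonal (finrank_fin_fun k)
  obtain ⟨P, hP⟩ := M.exists_GL_mul_mul_inv_eq_toMatrix b
  exact ⟨P, hP.trans hb⟩
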